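/- Let R be an integral domain with quotient field K, let X be an indeterminate over R, and let * be a semistar operation on the polynomial ring R[X]. Define \bar{*} on R by E^{\bar{*}} = (E[X])^* ∩ K for each nonzero R-submodule E of K, where E[X] denotes the R[X]-submodule of K(X) generated by E. If * has finite character, then \bar{*} has finite character. -/

import Mathlib

open Polynomial Pointwise

/-- A *semistar operation* on a domain `S` with quotient field `M`: a map on the
(nonzero) `S`-submodules of `M` satisfying `(aE)^* = aE^*`, `E ⊆ E^*`,
monotonicity and idempotency. -/
structure IsSemistarOperation (S M : Type*) [CommRing S] [Field M] [Algebra S M]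
    (star : Submodule S M → Submodule S M) : Prop where
  smul_eq : ∀ a : M, a ≠ 0 → ∀ E : Submodule S M, E ≠ ⊥ → star (a • E) = a • star E
  le_star : ∀ E : Submodule S M, E ≠ ⊥ → E ≤ star E
  mono : ∀ E F : Submodule S M, E ≠ ⊥ → F ≠ ⊥ → E ≤ F → star E ≤ star F
  idem : ∀ E : Submodule S M, E ≠ ⊥ → star (star E) = star E

variable {R K L : Type*} [CommRing R] [IsDomain R]
  [Field K] [Algebra R K] [IsFractionRing R K]
  [Field L] [Algebra R[X] L] [IsFractionRing R[X] L]

/-- `E[X]`: the `R[X]`-submodule of `L = K(X)` generated by `E ⊆ K`,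
where `ι : K →+* L` is the canonical embedding. -/
noncomputable def polyExt (ι : K →+* L) (E : Submodule R K) : Submodule R[X] L :=
  Submodule.span R[X] (ι '' (E : Set K))

/-- The operation `E ↦ E^{\bar{*}} = (E[X])^* ∩ K` on `R`-submodules of `K` induced by a
semistar operation `*` on `R[X]`. -/
def barStar (star : Submodule R[X] L → Submodule R[X] L) (ι : K →+* L)
    (hι : ∀ r : R, ι (algebraMap R K r) = algebraMap R[X] L (C r))
    (E : Submodule R K) : Submodule R K where
  carrier := ι ⁻¹' (star (polyExt ι E) : Set L)
  add_mem' := fun {a b} ha hb => by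
    simp only [Set.mem_preimage, SetLike.mem_coe, map_add] at *
    exact (star (polyExt ι _)).add_mem ha hb
  zero_mem' := by
    simp only [Set.mem_preimage, SetLike.mem_coe, map_zero]
    exact (star (polyExt ι _)).zero_mem
  smul_mem' := fun r x hx => by
    simp only [Set.mem_preimage, SetLike.mem_coe] at *
    have h : ι (r • x) = (C r : R[X]) • ι x := by
      rw [Algebra.smul_def, map_mul, hι, Algebra.smul_def]
    rw [h]
    exact (star (polyExt ι _)).smul_mem _ hx

/-- A semistar operation has *finite character* if
`E^* = ⋃ {F^* : F nonzero finitely generated, F ⊆ E}`. -/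
def SemistarFiniteCharacter (S M : Type*) [CommRing S] [Field M] [Algebra S M]
    (star : Submodule S M → Submodule S M) : Prop :=
  ∀ E : Submodule S M, E ≠ ⊥ → ∀ x : M,
    x ∈ star E ↔ ∃ F : Submodule S M, F ≠ ⊥ ∧ F.FG ∧ F ≤ E ∧ x ∈ star F

/-!
If `ι x ∈ (E[X])^*`, finite character of `*` gives a finitely generated `G ⊆ E[X]` with
`ι x ∈ G^*`. Each of the finitely many generators of `G` involves only finitely many elements
of `E`; together with one nonzero element of `E` they span a nonzero finitely generated
`F ⊆ E` with `G ⊆ F[X]`, so `x ∈ F^{\bar{*}}` by monotonicity of `*`.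
-/

section

variable {R K L : Type*} [CommRing R] [Field K] [Algebra R K] [Field L] [Algebra R[X] L]
  (ι : K →+* L)

lemma polyExt_mono {E F : Submodule R K} (h : E ≤ F) : polyExt ι E ≤ polyExt ι F :=
  Submodule.span_mono (Set.image_mono h)

lemma polyExt_ne_bot {E : Submodule R K} (hE : E ≠ ⊥) : polyExt ι E ≠ ⊥ := by
  obtain ⟨e, heE, he⟩ := Submodule.exists_mem_ne_zero_of_ne_bot hE
  exact Submodule.ne_bot_iff _ |>.2
    ⟨ι e, Submodule.subset_span ⟨e, heE, rfl⟩, (map_ne_zero ι).2 he⟩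

lemma Submodule.FG.exists_finite_le_polyExt_span {E : Submodule R K} {G : Submodule R[X] L}
    (hG : G.FG) (hGE : G ≤ polyExt ι E) :
    ∃ A : Set K, A.Finite ∧ A ⊆ E ∧ G ≤ polyExt ι (Submodule.span R A) := by
  classical
  obtain ⟨s, rfl⟩ := hG
  obtain ⟨T, hTE, hsT⟩ := Submodule.subset_span_finite_of_subset_span
    (Submodule.span_le.1 hGE)
  obtain ⟨A, hAE, rfl⟩ := Finset.subset_set_image_iff.1 hTE
  refine ⟨A, A.finite_toSet, hAE, Submodule.span_le.2 (hsT.trans ?_)⟩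
  rw [Finset.coe_image]
  exact Submodule.span_mono (Set.image_mono Submodule.subset_span)

lemma barStar_mono {star : Submodule R[X] L → Submodule R[X] L}
    (hstar : IsSemistarOperation R[X] L star)
    (hι : ∀ r : R, ι (algebraMap R K r) = algebraMap R[X] L (C r))
    {E F : Submodule R K} (hE : E ≠ ⊥) (hF : F ≠ ⊥) (h : E ≤ F) :
    barStar star ι hι E ≤ barStar star ι hι F := fun _ hx =>
  hstar.mono _ _ (polyExt_ne_bot ι hE) (polyExt_ne_bot ι hF) (polyExt_mono ι h) hx

end

/-- if `*` has finite character, so does `\bar{*}`. -/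
theorem barStar_finiteCharacter
    (star : Submodule R[X] L → Submodule R[X] L)
    (hstar : IsSemistarOperation R[X] L star)
    (hfc : SemistarFiniteCharacter R[X] L star)
    (ι : K →+* L)
    (hι : ∀ r : R, ι (algebraMap R K r) = algebraMap R[X] L (C r)) :
    SemistarFiniteCharacter R K (barStar star ι hι) := by
  intro E hE x
  refine ⟨fun hx => ?_, fun ⟨F, hF, _, hFE, hxF⟩ => barStar_mono ι hstar hι hF hE hFE hxF⟩
  obtain ⟨G, hG, hGfg, hGE, hxG⟩ := (hfc _ (polyExt_ne_bot ι hE) (ι x)).1 hx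
  obtain ⟨A, hA, hAE, hGA⟩ := hGfg.exists_finite_le_polyExt_span ι hGE
  obtain ⟨e, heE, he⟩ := Submodule.exists_mem_ne_zero_of_ne_bot hE
  set F := Submodule.span R (insert e A)
  have hF : F ≠ ⊥ :=
    Submodule.ne_bot_iff _ |>.2 ⟨e, Submodule.subset_span (Set.mem_insert e A), he⟩
  have hGF : G ≤ polyExt ι F :=
    hGA.trans (polyExt_mono ι (Submodule.span_mono (Set.subset_insert e A)))
  refine ⟨F, hF, Submodule.fg_span (hA.insert e), ?_, ?_⟩
  · exact Submodule.span_le.2 (Set.insert_subset heE hAE)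
  · exact hstar.mono G _ hG (polyExt_ne_bot ι hF) hGF hxG
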